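/- Condition (C) holds: let E_n be the event that for every y ∈ P(ω) ∩ [−n,n]^d there exists a P(ω)-nearest neighbor path from 0 to y all of whose points lie in [−n,n]^d. Then the sequence (P(E_n^c))_{n≥1} is summable; indeed there exist positive constants C₁, C₂ (depending on d and Q) such that P(E_n^c) ≤ C₁ ρ^{C₂ n} for all sufficiently large n, where ρ := 1 − Q(Ω₀). -/

import Mathlib

open MeasureTheory ProbabilityTheory Filter
open scoped ENNReal Topology

namespace RWDPP

attribute [local instance] Classical.propDecidable


/-- Configuration space `Ω = {0,1}^{ℤ^d}`. -/
abbrev Cfg (d : ℕ) := (Fin d → ℤ) → Bool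

/-- Canonical shift `T_y ω (x) = ω (x + y)`. -/
def shift (d : ℕ) (y : Fin d → ℤ) (ω : Cfg d) : Cfg d := fun x => ω (x + y)

/-- Embedding of `ℤ^d` into `ℝ^d` (with the Euclidean norm). -/
def toE (d : ℕ) (x : Fin d → ℤ) : EuclideanSpace ℝ (Fin d) := WithLp.toLp 2 (fun i => (x i : ℝ))

/-- Euclidean norm `|x|` of a lattice point. -/
noncomputable def nrm (d : ℕ) (x : Fin d → ℤ) : ℝ := ‖toE d x‖

/-- Sup norm `|x|_∞` of a lattice point. -/
def nrmInf (d : ℕ) (x : Fin d → ℤ) : ℕ := Finset.univ.sup fun i => (x i).natAbs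

/-- The `2d` unit vectors of `ℤ^d`. -/
def unitVecs (d : ℕ) : Set (Fin d → ℤ) :=
  {e | ∃ i : Fin d, e = Pi.single i 1 ∨ e = Pi.single i (-1)}

/-- `γ_e(ω) = inf {k ≥ 1 : ω(k e) = 1}`. -/
noncomputable def gamma (d : ℕ) (e : Fin d → ℤ) (ω : Cfg d) : ℕ :=
  sInf {k : ℕ | 1 ≤ k ∧ ω ((k : ℤ) • e) = true}

/-- The nearest neighbor of `x` in direction `e`: `x + γ_e(T_x ω) e`. -/
noncomputable def nbr (d : ℕ) (ω : Cfg d) (x e : Fin d → ℤ) : Fin d → ℤ :=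
  x + (gamma d e (shift d x ω) : ℤ) • e

/-- The set `N_x(ω)` of the `2d` nearest neighbors of `x`. -/
noncomputable def nbrs (d : ℕ) (ω : Cfg d) (x : Fin d → ℤ) : Set (Fin d → ℤ) :=
  {y | ∃ e ∈ unitVecs d, y = nbr d ω x e}

/-- `(p 0, …, p m)` is a `𝒫(ω)`-nearest neighbor path. -/
def IsPath (d : ℕ) (ω : Cfg d) (p : ℕ → Fin d → ℤ) (m : ℕ) : Prop :=
  ω (p 0) = true ∧ ∀ k, 1 ≤ k → k ≤ m → p k ∈ nbrs d ω (p (k - 1))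

/-- The event `Ω₀ = {ω : ω(0) = 1}`. -/
def Omega0 (d : ℕ) : Set (Cfg d) := {ω | ω 0 = true}

/-- The σ-field generated by the coordinates in `A`. -/
def coordSigma (d : ℕ) (A : Set (Fin d → ℤ)) : MeasurableSpace (Cfg d) :=
  MeasurableSpace.comap (fun ω (x : A) => ω x) inferInstance

/-- Assumptions (A1)–(A3) on the law `Q` of the discrete point process. -/
structure Assumptions (d : ℕ) (Q : Measure (Cfg d)) : Prop where
  prob : IsProbabilityMeasure Q
  a1_pos : 0 < Q (Omega0 d)
  a1_lt : Q (Omega0 d) < 1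
  a2 : ∃ ℓ : ℝ, 0 < ℓ ∧ ∀ A B : Set (Fin d → ℤ),
    (∀ x ∈ A, ∀ y ∈ B, ℓ ≤ nrm d (x - y)) →
      Indep (coordSigma d A) (coordSigma d B) Q
  a3 : ∀ y : Fin d → ℤ, MeasurePreserving (shift d y) Q Q

/-- The conditioned measure `P = Q(·|Ω₀)`. -/
noncomputable def condP (d : ℕ) (Q : Measure (Cfg d)) : Measure (Cfg d) := Q[|Omega0 d]

/-- One-step transition probability of the RWDPP. -/
noncomputable def stepP (d : ℕ) (ω : Cfg d) (x y : Fin d → ℤ) : ℝ :=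
  if y ∈ nbrs d ω x then 1 / (2 * d) else 0

/-- Discrete trajectory space. -/
abbrev Traj (d : ℕ) := ℕ → Fin d → ℤ

/-- `μ` is the family of quenched laws `P_ω^z` of the RWDPP in the environment `ω`:
`μ z` is a probability measure with `μ z (X₀ = z) = 1` under which `(X_n)` is the Markov
chain with transition probability `1/(2d)` to each nearest neighbor. -/
def IsQuenchedLaw (d : ℕ) (ω : Cfg d) (μ : (Fin d → ℤ) → Measure (Traj d)) : Prop :=
  (∀ z, IsProbabilityMeasure (μ z)) ∧
  ∀ z, ω z = true → ∀ n : ℕ, ∀ x : Traj d,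
    μ z {p | ∀ k ≤ n, p k = x k} =
      (if x 0 = z then 1 else 0) *
        ∏ k ∈ Finset.range n, ENNReal.ofReal (stepP d ω (x k) (x (k + 1)))

/-- `P(N_{t} - N_{s} = k)` for a rate-one Poisson process, `r = t - s`. -/
noncomputable def poissonProb (r : ℝ) (k : ℕ) : ℝ≥0∞ :=
  ENNReal.ofReal (Real.exp (-r) * r ^ k / (Nat.factorial k))

/-- `ν` is the law of (the path of) a rate-one Poisson process `(N_t)_{t ≥ 0}`. -/
def IsPoissonPath (ν : Measure (ℝ → ℕ)) : Prop :=
  IsProbabilityMeasure ν ∧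
  (∀ᵐ η ∂ν, Monotone η ∧ ∀ t : ℝ, t ≤ 0 → η t = 0) ∧
  ∀ m : ℕ, ∀ t : ℕ → ℝ, 0 ≤ t 0 → Monotone t → ∀ k : ℕ → ℕ,
    ν {η | ∀ i < m, η (t (i + 1)) - η (t i) = k i} =
      ∏ i ∈ Finset.range m, poissonProb (t (i + 1) - t i) (k i)

/-- The continuous-time walk `Y_t = X_{N_t}`, realized on the product of the trajectory
space of the discrete walk and the path space of the Poisson process. -/
def Yt (d : ℕ) (q : Traj d × (ℝ → ℕ)) (t : ℝ) : Fin d → ℤ := q.1 (q.2 t)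

/-- `τ_n = inf {t ≥ 0 : |Y_t - Y_0| ≥ n}`. -/
noncomputable def hitTime (d : ℕ) (n : ℕ) (q : Traj d × (ℝ → ℕ)) : ℝ :=
  sInf {t : ℝ | 0 ≤ t ∧ (n : ℝ) ≤ nrm d (Yt d q t - Yt d q 0)}

/-- `max_{x ∈ 𝒫(ω), |x| ≤ n} g x` (Euclidean balls). -/
noncomputable def maxOn (d : ℕ) (ω : Cfg d) (g : (Fin d → ℤ) → ℝ) (n : ℕ) : ℝ :=
  sSup {r : ℝ | ∃ x, ω x = true ∧ nrm d x ≤ (n : ℝ) ∧ r = g x}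

/-- `max_{x ∈ 𝒫(ω), |x|_∞ ≤ n} g x` (sup-norm boxes). -/
noncomputable def maxOnInf (d : ℕ) (ω : Cfg d) (g : (Fin d → ℤ) → ℝ) (n : ℕ) : ℝ :=
  sSup {r : ℝ | ∃ x, ω x = true ∧ nrmInf d x ≤ n ∧ r = g x}

/-- The `2d` unit vectors, as a finite set. -/
noncomputable def unitFinset (d : ℕ) : Finset (Fin d → ℤ) :=
  (Finset.univ.image fun i : Fin d => (Pi.single i 1 : Fin d → ℤ)) ∪
    (Finset.univ.image fun i : Fin d => (Pi.single i (-1) : Fin d → ℤ))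

/-- `x ↦ x + ψ x` is harmonic on `𝒫(ω)` for the RWDPP transition probability. -/
def IsHarmonicDeform (d : ℕ) (ω : Cfg d) (ψ : (Fin d → ℤ) → EuclideanSpace ℝ (Fin d)) : Prop :=
  ∀ x, ω x = true →
    (1 / (2 * (d : ℝ))) • ∑ e ∈ unitFinset d, (toE d (nbr d ω x e) + ψ (nbr d ω x e))
      = toE d x + ψ x

/-- `‖(χ(x,·) - χ(y,·)) 1{x ∈ 𝒫} 1{y ∈ N_x}‖_{L²(P)}²`. -/
noncomputable def corrL2sq (d : ℕ) (P : Measure (Cfg d))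
    (χ : (Fin d → ℤ) → Cfg d → EuclideanSpace ℝ (Fin d)) (x y : Fin d → ℤ) : ℝ≥0∞ :=
  ∫⁻ ω, ENNReal.ofReal
    (if ω x = true ∧ y ∈ nbrs d ω x then ‖χ x ω - χ y ω‖ ^ 2 else 0) ∂P

/-- Graph distance on `𝒫(ω)` (`⊤` if not connected). -/
noncomputable def graphDist (d : ℕ) (ω : Cfg d) (x y : Fin d → ℤ) : ℕ∞ :=
  sInf {m : ℕ∞ | ∃ k : ℕ, m = (k : ℕ∞) ∧ ∃ p : Traj d, p 0 = x ∧ p k = y ∧ IsPath d ω p k}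

/-- The event `E_n`: every `y ∈ 𝒫(ω) ∩ [-n,n]^d` is joined to `0` by a
`𝒫(ω)`-nearest neighbor path all of whose points lie in `[-n,n]^d`. -/
def En (d : ℕ) (n : ℕ) : Set (Cfg d) :=
  {ω | ∀ y : Fin d → ℤ, ω y = true → (∀ j : Fin d, (y j).natAbs ≤ n) →
    ∃ (m : ℕ) (z : Traj d), z 0 = 0 ∧ z m = y ∧ IsPath d ω z m ∧
      ∀ k ≤ m, ∀ j : Fin d, (z k j).natAbs ≤ n}

/-!
Fix a coordinate `i₀` and view `ℤ^d` as a union of lines `b + ℤ e_{i₀}`. Walking along a line, or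
between two points of `𝒫(ω)` that differ in a single coordinate, visits every point of `𝒫(ω)` in
between, so it stays in the box. Hence if any two lines at distance `D` or `D + 1` in another
coordinate carry points of `𝒫(ω)` at a common height, every point of `𝒫(ω) ∩ [-n,n]^d` is joined
to `0` inside the box: jumps `±D, ±(D+1)` connect all lines. For `D ≥ ℓ`, the heights
`-n + jD`, `j ≤ n / D`, give `n / D + 1` independent chances to link two such lines, each of
probability `Q(Ω₀)²`. A union bound over the `O(n^d)` pairs of lines gives
`P(E_nᶜ) ≤ C n^d (1 - Q(Ω₀)²)^{n/D}`, which is eventually below `ρ^{C₂ n}`.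
-/

section Paths

variable {d : ℕ}

def InBox (n : ℕ) (x : Fin d → ℤ) : Prop := ∀ j, (x j).natAbs ≤ n

def BoxStep (ω : Cfg d) (n : ℕ) (x y : Fin d → ℤ) : Prop := y ∈ nbrs d ω x ∧ InBox n y

lemma InBox.zero (n : ℕ) : InBox n (0 : Fin d → ℤ) := fun j => by simp

lemma InBox.of_reflTransGen {ω : Cfg d} {n : ℕ} {x y : Fin d → ℤ} (hx : InBox n x)
    (h : Relation.ReflTransGen (BoxStep ω n) x y) : InBox n y := by
  rcases h.cases_tail with rfl | ⟨_, -, -, hy⟩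
  exacts [hx, hy]

lemma exists_isPath_of_reflTransGen {ω : Cfg d} {n : ℕ} {x y : Fin d → ℤ}
    (h : Relation.ReflTransGen (BoxStep ω n) x y) (hx : ω x = true) (hbx : InBox n x) :
    ∃ (m : ℕ) (z : Traj d), z 0 = x ∧ z m = y ∧ IsPath d ω z m ∧ ∀ k ≤ m, InBox n (z k) := by
  induction h with
  | refl => exact ⟨0, fun _ => x, rfl, rfl, ⟨hx, fun k hk hk0 => by omega⟩, fun _ _ => hbx⟩
  | @tail _ c _ hstep ih =>
    obtain ⟨m, z, hz0, hzm, ⟨hz0occ, hzstep⟩, hzbox⟩ := ih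
    refine ⟨m + 1, Function.update z (m + 1) c, ?_, by simp, ⟨?_, fun k hk1 hk => ?_⟩,
      fun k hk => ?_⟩
    · rwa [Function.update_of_ne (by omega)]
    · rwa [Function.update_of_ne (by omega)]
    · rw [Function.update_of_ne (show k - 1 ≠ m + 1 by omega)]
      rcases (show k ≤ m ∨ k = m + 1 by omega) with hkm | rfl
      · rw [Function.update_of_ne (by omega)]
        exact hzstep k hk1 hkm
      · simpa [hzm] using hstep.1
    · rcases (show k ≤ m ∨ k = m + 1 by omega) with hkm | rfl
      · rw [Function.update_of_ne (by omega)]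
        exact hzbox k hkm
      · simpa using hstep.2

lemma gamma_mem_Icc {ω : Cfg d} {e u : Fin d → ℤ} {c : ℕ} (hc : 1 ≤ c)
    (hocc : ω (u + (c : ℤ) • e) = true) : gamma d e (shift d u ω) ∈ Set.Icc 1 c := by
  have hc_mem : c ∈ {k : ℕ | 1 ≤ k ∧ shift d u ω ((k : ℤ) • e) = true} :=
    ⟨hc, by simpa [shift, add_comm] using hocc⟩
  exact ⟨(Nat.sInf_mem ⟨c, hc_mem⟩).1, Nat.sInf_le hc_mem⟩

lemma natAbs_add_mul_le {a b : ℤ} {k c : ℕ} (hk : k ≤ c) :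
    (a + k * b).natAbs ≤ max a.natAbs (a + c * b).natAbs := by
  rcases le_total 0 b with hb | hb
  · have : (k : ℤ) * b ≤ c * b := mul_le_mul_of_nonneg_right (by exact_mod_cast hk) hb
    have : 0 ≤ (k : ℤ) * b := by positivity
    omega
  · have : (c : ℤ) * b ≤ k * b := mul_le_mul_of_nonpos_right (by exact_mod_cast hk) hb
    have : (k : ℤ) * b ≤ 0 := mul_nonpos_of_nonneg_of_nonpos (by positivity) hb
    omega

lemma InBox.add_smul_of_le {n : ℕ} {u e : Fin d → ℤ} {k c : ℕ} (hu : InBox n u)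
    (hv : InBox n (u + (c : ℤ) • e)) (hk : k ≤ c) : InBox n (u + (k : ℤ) • e) := fun j => by
  have := hv j
  simp only [Pi.add_apply, Pi.smul_apply, smul_eq_mul] at this ⊢
  exact (natAbs_add_mul_le hk).trans (max_le (hu j) this)

lemma reflTransGen_add_smul {ω : Cfg d} {n : ℕ} {u e : Fin d → ℤ} (he : e ∈ unitVecs d)
    (c : ℕ) (hv : ω (u + (c : ℤ) • e) = true) (hu : InBox n u) (hbv : InBox n (u + (c : ℤ) • e)) :
    Relation.ReflTransGen (BoxStep ω n) u (u + (c : ℤ) • e) := by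
  induction c using Nat.strong_induction_on generalizing u with
  | _ c ih =>
    rcases Nat.eq_zero_or_pos c with rfl | hc
    · simpa using Relation.ReflTransGen.refl
    obtain ⟨hγ1, hγc⟩ := gamma_mem_Icc hc hv
    set γ := gamma d e (shift d u ω)
    have hw : u + (c : ℤ) • e = (u + (γ : ℤ) • e) + ((c - γ : ℕ) : ℤ) • e := by
      rw [add_assoc, ← add_smul]; congr; omega
    have hbw : InBox n (u + (γ : ℤ) • e) := hu.add_smul_of_le hbv hγc
    refine Relation.ReflTransGen.head ⟨⟨e, he, rfl⟩, hbw⟩ ?_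
    rw [hw] at hv hbv ⊢
    exact ih (c - γ) (by omega) hv hbw hbv

lemma exists_eq_add_smul_of_eq_off {u v : Fin d → ℤ} (i : Fin d) (h : ∀ j, j ≠ i → u j = v j) :
    ∃ e ∈ unitVecs d, ∃ c : ℕ, v = u + (c : ℤ) • e := by
  rcases le_total (u i) (v i) with hle | hle
  · refine ⟨Pi.single i 1, ⟨i, Or.inl rfl⟩, (v i - u i).toNat, funext fun j => ?_⟩
    by_cases hj : j = i
    · subst hj; simp; omega
    · simp [hj, h j hj]
  · refine ⟨Pi.single i (-1), ⟨i, Or.inr rfl⟩, (u i - v i).toNat, funext fun j => ?_⟩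
    by_cases hj : j = i
    · subst hj; simp; omega
    · simp [hj, h j hj]

lemma reflTransGen_of_eq_off {ω : Cfg d} {n : ℕ} {u v : Fin d → ℤ} (i : Fin d)
    (h : ∀ j, j ≠ i → u j = v j) (hv : ω v = true) (hu : InBox n u) (hbv : InBox n v) :
    Relation.ReflTransGen (BoxStep ω n) u v := by
  obtain ⟨e, he, c, rfl⟩ := exists_eq_add_smul_of_eq_off i h
  exact reflTransGen_add_smul he c hv hu hbv

end Paths

section Navigation

/-- Jumps of length at least `D` that still generate `ℤ`, since `D` and `D + 1` are coprime. -/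
def jumps (D : ℕ) : Finset ℤ := {(D : ℤ), (D : ℤ) + 1, -(D : ℤ), -((D : ℤ) + 1)}

lemma le_natAbs_of_mem_jumps {D : ℕ} {s : ℤ} (hs : s ∈ jumps D) : D ≤ s.natAbs := by
  simp only [jumps, Finset.mem_insert, Finset.mem_singleton] at hs
  omega

def JumpStep (D n : ℕ) (a a' : ℤ) : Prop := a' - a ∈ jumps D ∧ a'.natAbs ≤ n

variable {D n : ℕ}

/-- A unit move `c → c + 1` is a jump `D + 1` followed by a jump `-D`, or the reverse when the
first jump would leave `[-n, n]`. -/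
lemma reflTransGen_jumpStep_succ (hDn : D ≤ n) {c : ℤ} (hc : (c + 1).natAbs ≤ n) :
    Relation.ReflTransGen (JumpStep D n) c (c + 1) := by
  by_cases h : c + 1 + D ≤ n
  · refine .tail (.single (b := c + 1 + D) ⟨?_, by omega⟩) ⟨?_, hc⟩
    all_goals simp only [jumps, Finset.mem_insert, Finset.mem_singleton]; omega
  · refine .tail (.single (b := c - D) ⟨?_, by omega⟩) ⟨?_, hc⟩
    all_goals simp only [jumps, Finset.mem_insert, Finset.mem_singleton]; omega

lemma reflTransGen_jumpStep_natCast (hDn : D ≤ n) (k : ℕ) (hk : k ≤ n) :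
    Relation.ReflTransGen (JumpStep D n) 0 k := by
  induction k with
  | zero => exact .refl
  | succ k ih =>
    push_cast
    exact (ih (by omega)).trans (reflTransGen_jumpStep_succ hDn (by omega))

lemma reflTransGen_jumpStep (hDn : D ≤ n) {c : ℤ} (hc : c.natAbs ≤ n) :
    Relation.ReflTransGen (JumpStep D n) 0 c := by
  obtain ⟨k, rfl | rfl⟩ := Int.eq_nat_or_neg c
  · exact reflTransGen_jumpStep_natCast hDn k (by omega)
  · have hneg : ∀ a a', JumpStep D n a a' → JumpStep D n (-a) (-a') := fun a a' ⟨hs, ha'⟩ =>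
      ⟨by simp only [jumps, Finset.mem_insert, Finset.mem_singleton] at hs ⊢; omega, by omega⟩
    simpa [Function.onFun] using (reflTransGen_jumpStep_natCast hDn k (by omega)).lift Neg.neg hneg

variable {d : ℕ}

/-- `b` stands for the line `b + ℤ e_{i₀}`; a step moves it in another coordinate by a jump. -/
def FiberStep (D n : ℕ) (i₀ : Fin d) (b b' : Fin d → ℤ) : Prop :=
  ∃ i ≠ i₀, ∃ s ∈ jumps D, b' = Function.update b i (b i + s) ∧ InBox n b'

lemma reflTransGen_fiberStep (hDn : D ≤ n) (i₀ : Fin d) {b : Fin d → ℤ} (hb₀ : b i₀ = 0)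
    (hb : InBox n b) : Relation.ReflTransGen (FiberStep D n i₀) 0 b := by
  let mask (s : Finset (Fin d)) : Fin d → ℤ := fun j => if j ∈ s then b j else 0
  have hmask : ∀ s, InBox n (mask s) := fun s j => by
    by_cases hj : j ∈ s <;> simp [mask, hj, hb j]
  suffices ∀ s, Relation.ReflTransGen (FiberStep D n i₀) 0 (mask s) by
    simpa [mask] using this Finset.univ
  intro s
  induction s using Finset.induction_on with
  | empty => exact (show mask ∅ = 0 from funext fun j => by simp [mask]) ▸ .refl
  | @insert i s hi ih =>
    refine ih.trans ?_
    by_cases hii : i = i₀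
    · have : mask (insert i s) = mask s := funext fun j => by
        by_cases hj : j = i₀ <;> simp [mask, hj, hii, hb₀]
      rw [this]
    have hlift : ∀ a a', JumpStep D n a a' →
        FiberStep D n i₀ (Function.update (mask s) i a) (Function.update (mask s) i a') :=
      fun a a' ⟨hs, ha'⟩ => ⟨i, hii, a' - a, hs, by simp, fun j => by
        by_cases hj : j = i
        · subst hj; simpa using ha'
        · simpa [hj] using hmask s j⟩
    have h := (reflTransGen_jumpStep hDn (hb i)).lift _ hlift
    convert h using 1 <;> funext j <;> by_cases hj : j = i <;> simp [mask, hj, hi]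

end Navigation

section Fibers

variable {d : ℕ}

/-- The lines `b + ℤ e_{i₀}` and `b' + ℤ e_{i₀}` carry points of `𝒫(ω)` at a common height
`t ∈ [-n, n]`. -/
def Linked (ω : Cfg d) (n : ℕ) (i₀ : Fin d) (b b' : Fin d → ℤ) : Prop :=
  ∃ t : ℤ, t.natAbs ≤ n ∧ ω (Function.update b i₀ t) = true ∧
    ω (Function.update b' i₀ t) = true

def AllLinked (D n : ℕ) (i₀ : Fin d) (ω : Cfg d) : Prop :=
  ∀ b b', InBox n b → FiberStep D n i₀ b b' → Linked ω n i₀ b b'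

def FiberReached (ω : Cfg d) (n : ℕ) (i₀ : Fin d) (b : Fin d → ℤ) : Prop :=
  ∃ p, (∀ j, j ≠ i₀ → p j = b j) ∧ Relation.ReflTransGen (BoxStep ω n) 0 p

variable {ω : Cfg d} {D n : ℕ} {i₀ : Fin d}

lemma InBox.update {b : Fin d → ℤ} (hb : InBox n b) (i : Fin d) {t : ℤ} (ht : t.natAbs ≤ n) :
    InBox n (Function.update b i t) := fun j => by
  by_cases hj : j = i
  · subst hj; simpa using ht
  · simpa [hj] using hb j

/-- Go along the line of `b` to the height `t` of the link, then across to the line of `b'`. -/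
lemma FiberReached.of_fiberStep {b b' : Fin d → ℤ} (hreach : FiberReached ω n i₀ b)
    (hb : InBox n b) (hstep : FiberStep D n i₀ b b') (hlink : Linked ω n i₀ b b') :
    FiberReached ω n i₀ b' := by
  obtain ⟨p, hpb, h0p⟩ := hreach
  obtain ⟨i, -, s, -, rfl, hb'⟩ := hstep
  obtain ⟨t, ht, hx, hx'⟩ := hlink
  have hpx : Relation.ReflTransGen (BoxStep ω n) p (Function.update b i₀ t) :=
    reflTransGen_of_eq_off i₀ (fun j hj => by simp [hj, hpb j hj]) hx
      ((InBox.zero n).of_reflTransGen h0p) (hb.update i₀ ht)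
  have hxx' : Relation.ReflTransGen (BoxStep ω n) (Function.update b i₀ t)
      (Function.update (Function.update b i (b i + s)) i₀ t) :=
    reflTransGen_of_eq_off i (fun j hj => by
      by_cases hj₀ : j = i₀ <;> simp [hj, hj₀]) hx' (hb.update i₀ ht) (hb'.update i₀ ht)
  exact ⟨_, fun j hj => by simp [hj], (h0p.trans hpx).trans hxx'⟩

lemma fiberReached_of_reflTransGen (hlinked : AllLinked D n i₀ ω)
    {b : Fin d → ℤ} (h : Relation.ReflTransGen (FiberStep D n i₀) 0 b) :
    InBox n b ∧ FiberReached ω n i₀ b := by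
  induction h with
  | refl => exact ⟨InBox.zero n, 0, fun _ _ => rfl, .refl⟩
  | tail _ hstep ih =>
    refine ⟨?_, ih.2.of_fiberStep ih.1 hstep (hlinked _ _ ih.1 hstep)⟩
    obtain ⟨-, -, -, -, -, hbox⟩ := hstep
    exact hbox

lemma mem_En_of_allLinked (hDn : D ≤ n) (h₀ : ω 0 = true) (hlinked : AllLinked D n i₀ ω) :
    ω ∈ En d n := by
  intro y hy hyn
  obtain ⟨-, p, hpy, h0p⟩ := fiberReached_of_reflTransGen hlinked
    (reflTransGen_fiberStep hDn i₀ (b := Function.update y i₀ 0) (by simp)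
      (InBox.update hyn i₀ (by simp)))
  have h0y := h0p.trans (reflTransGen_of_eq_off i₀ (fun j hj => by simp [hpy j hj, hj]) hy
    ((InBox.zero n).of_reflTransGen h0p) hyn)
  exact exists_isPath_of_reflTransGen h0y h₀ (InBox.zero n)

end Fibers

section Probability

variable {d : ℕ}

def FiniteRangeIndep (Q : Measure (Cfg d)) (ℓ : ℝ) : Prop :=
  ∀ A B : Set (Fin d → ℤ), (∀ x ∈ A, ∀ y ∈ B, ℓ ≤ nrm d (x - y)) →
    Indep (coordSigma d A) (coordSigma d B) Q

lemma measurableSet_occupied (x : Fin d → ℤ) : MeasurableSet {ω : Cfg d | ω x = true} :=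
  (measurableSet_singleton true).preimage (measurable_pi_apply x)

lemma measurableSet_Omega0 : MeasurableSet (Omega0 d) := measurableSet_occupied 0

lemma measurableSet_coordSigma_occupied {A : Set (Fin d → ℤ)} {x : Fin d → ℤ} (hx : x ∈ A) :
    MeasurableSet[coordSigma d A] {ω : Cfg d | ω x = true} :=
  ⟨(fun f : A → Bool => f ⟨x, hx⟩) ⁻¹' {true},
    measurable_pi_apply _ (measurableSet_singleton true), rfl⟩

lemma coordSigma_mono {A B : Set (Fin d → ℤ)} (h : A ⊆ B) : coordSigma d A ≤ coordSigma d B := by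
  have : (fun ω (x : A) => ω x) =
      (fun (f : B → Bool) (x : A) => f ⟨x, h x.2⟩) ∘ fun (ω : Cfg d) (x : B) => ω x := rfl
  rw [coordSigma, coordSigma, this, ← MeasurableSpace.comap_comp]
  exact MeasurableSpace.comap_mono (measurable_pi_lambda _ fun x => measurable_pi_apply _).comap_le

lemma natAbs_le_nrm (x : Fin d → ℤ) (i : Fin d) : ((x i).natAbs : ℝ) ≤ nrm d x := by
  simpa [nrm, toE, Nat.cast_natAbs] using PiLp.norm_apply_le (toE d x) i

lemma le_nrm_sub {ℓ : ℝ} {x y : Fin d → ℤ} (i : Fin d) (h : ℓ ≤ (x i - y i).natAbs) :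
    ℓ ≤ nrm d (x - y) :=
  h.trans (natAbs_le_nrm (x - y) i)

variable {Q : Measure (Cfg d)} {ℓ : ℝ}

lemma measure_occupied (hstat : ∀ y, MeasurePreserving (shift d y) Q Q) (x : Fin d → ℤ) :
    Q {ω | ω x = true} = Q (Omega0 d) := by
  have : {ω : Cfg d | ω x = true} = shift d x ⁻¹' Omega0 d := by ext ω; simp [shift, Omega0]
  rw [this, (hstat x).measure_preimage measurableSet_Omega0.nullMeasurableSet]

lemma measure_biInter_eq_prod [IsProbabilityMeasure Q] (hind : FiniteRangeIndep Q ℓ) {ι : Type*}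
    (T : Finset ι) (A : ι → Set (Fin d → ℤ)) (E : ι → Set (Cfg d))
    (hE : ∀ j ∈ T, MeasurableSet[coordSigma d (A j)] (E j))
    (hsep : ∀ j ∈ T, ∀ j' ∈ T, j ≠ j' → ∀ x ∈ A j, ∀ y ∈ A j', ℓ ≤ nrm d (x - y)) :
    Q (⋂ j ∈ T, E j) = ∏ j ∈ T, Q (E j) := by
  induction T using Finset.induction_on with
  | empty => simp
  | @insert a T ha ih =>
    have hindep := hind (A a) (⋃ j ∈ T, A j) fun x hx y hy => by
      obtain ⟨j, hj, hyj⟩ := Set.mem_iUnion₂.1 hy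
      exact hsep a (T.mem_insert_self a) j (T.mem_insert_of_mem hj) (by rintro rfl; exact ha hj)
        x hx y hyj
    have hET : MeasurableSet[coordSigma d (⋃ j ∈ T, A j)] (⋂ j ∈ T, E j) :=
      .biInter T.countable_toSet fun j hj =>
        coordSigma_mono (Set.subset_biUnion_of_mem (u := A) hj) _
          (hE j (T.mem_insert_of_mem hj))
    rw [Finset.set_biInter_insert,
      (Indep_iff _ _ _).1 hindep _ _ (hE a (T.mem_insert_self a)) hET, Finset.prod_insert ha,
      ih (fun j hj => hE j (T.mem_insert_of_mem hj)) fun j hj j' hj' =>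
        hsep j (T.mem_insert_of_mem hj) j' (T.mem_insert_of_mem hj')]

lemma measure_occupied_inter_occupied (hstat : ∀ y, MeasurePreserving (shift d y) Q Q)
    (hind : FiniteRangeIndep Q ℓ) {u v : Fin d → ℤ} (huv : ℓ ≤ nrm d (u - v)) :
    Q ({ω | ω u = true} ∩ {ω | ω v = true}) = Q (Omega0 d) * Q (Omega0 d) := by
  have hindep := hind {u} {v} fun x hx y hy => by rw [hx, hy]; exact huv
  rw [(Indep_iff _ _ _).1 hindep _ _ (measurableSet_coordSigma_occupied rfl)
    (measurableSet_coordSigma_occupied rfl), measure_occupied hstat, measure_occupied hstat]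

/-- The candidate heights `-n + jD`, `j ≤ n / D`, give `n / D + 1` independent chances to link
two lines at distance at least `D ≥ ℓ`. -/
lemma measure_not_linked_le [IsProbabilityMeasure Q]
    (hstat : ∀ y, MeasurePreserving (shift d y) Q Q) (hind : FiniteRangeIndep Q ℓ)
    {D : ℕ} (hℓD : ℓ ≤ D) (n : ℕ) {i₀ i : Fin d} (hi : i ≠ i₀)
    {b b' : Fin d → ℤ} (hbb' : D ≤ (b i - b' i).natAbs) :
    Q {ω | ¬ Linked ω n i₀ b b'} ≤ (1 - Q (Omega0 d) * Q (Omega0 d)) ^ (n / D + 1) := by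
  let t (j : ℕ) : ℤ := -n + j * D
  let u (j : ℕ) := Function.update b i₀ (t j)
  let v (j : ℕ) := Function.update b' i₀ (t j)
  let E (j : ℕ) : Set (Cfg d) := ({ω | ω (u j) = true} ∩ {ω | ω (v j) = true})ᶜ
  have hsub : {ω | ¬ Linked ω n i₀ b b'} ⊆ ⋂ j ∈ Finset.range (n / D + 1), E j := by
    intro ω hω
    simp only [Set.mem_iInter, Finset.mem_range]
    intro j hj ⟨hu, hv⟩
    have : j * D ≤ n :=
      (Nat.mul_le_mul_right D (Nat.lt_succ_iff.1 hj)).trans (Nat.div_mul_le_self n D)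
    exact hω ⟨t j, show (-(n : ℤ) + j * D).natAbs ≤ n by omega, hu, hv⟩
  have hE : ∀ j, Q (E j) = 1 - Q (Omega0 d) * Q (Omega0 d) := fun j => by
    rw [prob_compl_eq_one_sub ((measurableSet_occupied _).inter (measurableSet_occupied _)),
      measure_occupied_inter_occupied hstat hind (le_nrm_sub i ?_)]
    have : (D : ℝ) ≤ (b i - b' i).natAbs := by exact_mod_cast hbb'
    simpa [u, v, Function.update_of_ne hi] using hℓD.trans this
  have hsep : ∀ j j', j ≠ j' → ∀ x ∈ ({u j, v j} : Set _), ∀ y ∈ ({u j', v j'} : Set _),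
      ℓ ≤ nrm d (x - y) := by
    intro j j' hjj' x hx y hy
    have hx : x i₀ = t j := by rcases hx with rfl | rfl <;> simp [u, v]
    have hy : y i₀ = t j' := by rcases hy with rfl | rfl <;> simp [u, v]
    refine le_nrm_sub i₀ (hℓD.trans ?_)
    rw [hx, hy]
    have : D ≤ ((j - j' : ℤ) * D).natAbs := by
      rw [Int.natAbs_mul]; exact Nat.le_mul_of_pos_left _ (by omega)
    exact_mod_cast this.trans_eq (by congr 1; ring)
  calc Q {ω | ¬ Linked ω n i₀ b b'} ≤ Q (⋂ j ∈ Finset.range (n / D + 1), E j) := measure_mono hsub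
    _ = ∏ j ∈ Finset.range (n / D + 1), Q (E j) :=
      measure_biInter_eq_prod hind _ (fun j => {u j, v j}) E
        (fun j _ => ((measurableSet_coordSigma_occupied (by simp)).inter
          (measurableSet_coordSigma_occupied (by simp))).compl)
        fun j _ j' _ => hsep j j'
    _ = (1 - Q (Omega0 d) * Q (Omega0 d)) ^ (n / D + 1) := by simp [hE]

end Probability

section UnionBound

variable {d : ℕ} {Q : Measure (Cfg d)} {ℓ : ℝ}

noncomputable def boxFinset (d n : ℕ) : Finset (Fin d → ℤ) :=
  Fintype.piFinset fun _ => Finset.Icc (-(n : ℤ)) n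

lemma card_boxFinset (d n : ℕ) : (boxFinset d n).card = (2 * n + 1) ^ d := by
  simp only [boxFinset, Fintype.card_piFinset, Int.card_Icc, Finset.prod_const,
    Finset.card_univ, Fintype.card_fin]
  congr 1
  omega

lemma measure_Omega0_inter_En_compl_le [IsProbabilityMeasure Q]
    (hstat : ∀ y, MeasurePreserving (shift d y) Q Q) (hind : FiniteRangeIndep Q ℓ)
    {D n : ℕ} (hℓD : ℓ ≤ D) (hDn : D ≤ n) (i₀ : Fin d) :
    Q (Omega0 d ∩ (En d n)ᶜ) ≤
      ((4 * d * (2 * n + 1) ^ d : ℕ) : ℝ≥0∞) * (1 - Q (Omega0 d) * Q (Omega0 d)) ^ (n / D + 1) := by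
  let J := boxFinset d n ×ˢ ((Finset.univ.erase i₀) ×ˢ jumps D)
  let Bad (idx : (Fin d → ℤ) × Fin d × ℤ) : Set (Cfg d) :=
    {ω | ¬ Linked ω n i₀ idx.1 (Function.update idx.1 idx.2.1 (idx.1 idx.2.1 + idx.2.2))}
  have hsub : Omega0 d ∩ (En d n)ᶜ ⊆ ⋃ idx ∈ J, Bad idx := by
    rintro ω ⟨h₀, hEn⟩
    have : ¬ AllLinked D n i₀ ω := fun h => hEn (mem_En_of_allLinked hDn h₀ h)
    simp only [AllLinked, not_forall] at this
    obtain ⟨b, _, hb, ⟨i, hi, s, hs, rfl, -⟩, hlink⟩ := this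
    refine Set.mem_iUnion₂.2 ⟨(b, i, s), ?_, hlink⟩
    simp only [J, boxFinset, Finset.mem_product, Fintype.mem_piFinset, Finset.mem_Icc,
      Finset.mem_erase, Finset.mem_univ, and_true]
    exact ⟨fun j => by have := hb j; omega, hi, hs⟩
  have hcard : J.card ≤ 4 * d * (2 * n + 1) ^ d := by
    simp only [J, Finset.card_product, card_boxFinset]
    have hi := (Finset.univ.erase i₀).card_le_univ.trans_eq (Fintype.card_fin d)
    have hs : (jumps D).card ≤ 4 := Finset.card_le_four
    calc (2 * n + 1) ^ d * ((Finset.univ.erase i₀).card * (jumps D).card)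
        ≤ (2 * n + 1) ^ d * (d * 4) := by gcongr
      _ = 4 * d * (2 * n + 1) ^ d := by ring
  calc Q (Omega0 d ∩ (En d n)ᶜ) ≤ Q (⋃ idx ∈ J, Bad idx) := measure_mono hsub
    _ ≤ ∑ idx ∈ J, Q (Bad idx) := measure_biUnion_finset_le J Bad
    _ ≤ ∑ _idx ∈ J, (1 - Q (Omega0 d) * Q (Omega0 d)) ^ (n / D + 1) := by
      refine Finset.sum_le_sum fun idx hidx => ?_
      simp only [J, Finset.mem_product, Finset.mem_erase] at hidx
      refine measure_not_linked_le hstat hind hℓD n hidx.2.1.1 ?_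
      simpa using le_natAbs_of_mem_jumps hidx.2.2
    _ ≤ _ := by
      rw [Finset.sum_const, nsmul_eq_mul]
      gcongr

lemma condP_En_compl_le [IsProbabilityMeasure Q] (hpos : 0 < Q (Omega0 d))
    (hstat : ∀ y, MeasurePreserving (shift d y) Q Q) (hind : FiniteRangeIndep Q ℓ)
    {D n : ℕ} (hℓD : ℓ ≤ D) (hDn : D ≤ n) (i₀ : Fin d) :
    condP d Q (En d n)ᶜ ≤ ENNReal.ofReal ((Q (Omega0 d)).toReal⁻¹ * (4 * d) * (2 * n + 1) ^ d *
      (1 - (Q (Omega0 d)).toReal ^ 2) ^ (n / D + 1)) := by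
  set q := (Q (Omega0 d)).toReal
  have hq : Q (Omega0 d) = ENNReal.ofReal q := (ENNReal.ofReal_toReal (measure_ne_top Q _)).symm
  have hq₀ : 0 < q := ENNReal.toReal_pos hpos.ne' (measure_ne_top Q _)
  have hq₁ : q ≤ 1 := ENNReal.toReal_le_of_le_ofReal zero_le_one (by simpa using prob_le_one)
  rw [condP, cond_apply measurableSet_Omega0]
  calc (Q (Omega0 d))⁻¹ * Q (Omega0 d ∩ (En d n)ᶜ)
      ≤ (Q (Omega0 d))⁻¹ * (((4 * d * (2 * n + 1) ^ d : ℕ) : ℝ≥0∞) *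
          (1 - Q (Omega0 d) * Q (Omega0 d)) ^ (n / D + 1)) := by
        gcongr
        exact measure_Omega0_inter_En_compl_le hstat hind hℓD hDn i₀
    _ = _ := by
      rw [hq, ← ENNReal.ofReal_mul hq₀.le, ← ENNReal.ofReal_one,
        ← ENNReal.ofReal_sub _ (by positivity), ← ENNReal.ofReal_pow (by nlinarith),
        ← ENNReal.ofReal_natCast, ← ENNReal.ofReal_mul (by positivity),
        ← ENNReal.ofReal_inv_of_pos hq₀, ← ENNReal.ofReal_mul (by positivity)]
      congr 1
      push_cast
      ring

end UnionBound

section Asymptotics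

lemma tsum_ne_top_of_le_pow {f : ℕ → ℝ≥0∞} {r : ℝ≥0∞} (hf : ∀ n, f n ≠ ⊤) (hr : r < 1)
    {n₀ : ℕ} (h : ∀ n, n₀ ≤ n → f n ≤ r ^ n) : ∑' n, f n ≠ ⊤ := by
  have hle : ∀ n, f n ≤ (Finset.range n₀ : Set ℕ).indicator f n + r ^ n := fun n => by
    by_cases hn : n < n₀
    · simp [hn]
    · exact (h n (not_lt.1 hn)).trans le_add_self
  refine ne_top_of_le_ne_top ?_ (ENNReal.tsum_le_tsum hle)
  rw [ENNReal.tsum_add, ← sum_eq_tsum_indicator, ENNReal.tsum_geometric]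
  exact ENNReal.add_ne_top.2
    ⟨ENNReal.sum_ne_top.2 fun n _ => hf n, ENNReal.inv_ne_top.2 (tsub_pos_of_lt hr).ne'⟩

lemma tendsto_two_mul_add_one_pow_mul_pow (k : ℕ) {t : ℝ} (ht₀ : 0 ≤ t) (ht₁ : t < 1) :
    Tendsto (fun n : ℕ => (2 * n + 1 : ℝ) ^ k * t ^ n) atTop (𝓝 0) := by
  have h := (tendsto_pow_const_mul_const_pow_of_abs_lt_one k
    (abs_lt.2 ⟨by linarith, ht₁⟩)).const_mul ((3 : ℝ) ^ k)
  rw [mul_zero] at h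
  refine squeeze_zero' (.of_forall fun n => by positivity) ?_ h
  filter_upwards [eventually_ge_atTop 1] with n hn
  have : (2 * n + 1 : ℝ) ≤ 3 * n := by
    have : (1 : ℝ) ≤ n := by exact_mod_cast hn
    linarith
  calc (2 * n + 1 : ℝ) ^ k * t ^ n ≤ (3 * n) ^ k * t ^ n := by gcongr
    _ = 3 ^ k * (n ^ k * t ^ n) := by ring

/-- With `t = β^{1/(2D)}` one has `β^{⌊n/D⌋+1} ≤ t^{2n}`; one factor `t^n` absorbs the polynomial,
the other is `ρ^{C₂ n}` for `C₂ = log_ρ t`. -/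
lemma exists_pos_eventually_le_rpow {K β ρ : ℝ} (k : ℕ) {D : ℕ} (hD : 0 < D) (hK : 0 ≤ K)
    (hβ₀ : 0 < β) (hβ₁ : β < 1) (hρ₀ : 0 < ρ) (hρ₁ : ρ < 1) :
    ∃ C₂ : ℝ, 0 < C₂ ∧ ∀ᶠ n : ℕ in atTop,
      K * (2 * n + 1) ^ k * β ^ (n / D + 1) ≤ ρ ^ (C₂ * n) := by
  set t := β ^ ((2 * D : ℝ)⁻¹)
  have ht₀ : 0 < t := Real.rpow_pos_of_pos hβ₀ _
  have ht₁ : t < 1 := Real.rpow_lt_one hβ₀.le hβ₁ (by positivity)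
  refine ⟨Real.logb ρ t, Real.logb_pos_of_base_lt_one hρ₀ hρ₁ ht₀ ht₁, ?_⟩
  have hρt : ∀ n : ℕ, ρ ^ (Real.logb ρ t * n) = t ^ n := fun n => by
    rw [Real.rpow_mul hρ₀.le, Real.rpow_logb hρ₀ hρ₁.ne ht₀, Real.rpow_natCast]
  have hβt : ∀ n : ℕ, β ^ (n / D + 1) ≤ t ^ n * t ^ n := fun n => by
    have hexp : (n : ℝ) / D ≤ ((n / D + 1 : ℕ) : ℝ) := by
      rw [div_le_iff₀ (by exact_mod_cast hD)]
      exact_mod_cast (Nat.lt_div_mul_add (a := n) hD).le.trans_eq (by ring)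
    calc β ^ (n / D + 1) = β ^ (((n / D + 1 : ℕ)) : ℝ) := (Real.rpow_natCast _ _).symm
      _ ≤ β ^ ((n : ℝ) / D) := Real.rpow_le_rpow_of_exponent_ge hβ₀ hβ₁.le hexp
      _ = t ^ n * t ^ n := by
        rw [← pow_add, ← Real.rpow_natCast, ← Real.rpow_mul hβ₀.le]
        congr 1
        field_simp
        push_cast
        ring
  have hsmall := (tendsto_two_mul_add_one_pow_mul_pow k ht₀.le ht₁).const_mul K
  filter_upwards [hsmall.eventually_lt_const (show K * 0 < 1 by simp)] with n hn
  calc K * (2 * n + 1) ^ k * β ^ (n / D + 1) ≤ K * (2 * n + 1) ^ k * (t ^ n * t ^ n) := by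
        gcongr; exact hβt n
    _ = K * ((2 * n + 1) ^ k * t ^ n) * t ^ n := by ring
    _ ≤ 1 * t ^ n := by gcongr
    _ = ρ ^ (Real.logb ρ t * n) := by rw [one_mul, hρt]

end Asymptotics

/-- **condition (C) holds.** There are `C₁, C₂ > 0` such that
`P(E_n^c) ≤ C₁ ρ^{C₂ n}` for all large `n`, where `ρ = 1 - Q(Ω₀)`; in particular
`(P(E_n^c))_n` is summable. -/
theorem conditionC_holds (d : ℕ) (hd : 2 ≤ d)
    (Q : Measure (Cfg d)) (hQ : Assumptions d Q) :
    (∃ C₁ C₂ : ℝ, 0 < C₁ ∧ 0 < C₂ ∧ ∃ n₀ : ℕ, ∀ n : ℕ, n₀ ≤ n →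
      condP d Q (En d n)ᶜ
        ≤ ENNReal.ofReal (C₁ * (1 - (Q (Omega0 d)).toReal) ^ (C₂ * n))) ∧
    ∑' n : ℕ, condP d Q (En d n)ᶜ ≠ ⊤ := by
  have := hQ.prob
  have : IsProbabilityMeasure (condP d Q) := cond_isProbabilityMeasure hQ.a1_pos.ne'
  obtain ⟨ℓ, -, hind⟩ := hQ.a2
  set q := (Q (Omega0 d)).toReal
  have hq₀ : 0 < q := ENNReal.toReal_pos hQ.a1_pos.ne' (measure_ne_top Q _)
  have hq₁ : q < 1 := by
    simpa using (ENNReal.toReal_lt_toReal (measure_ne_top Q _) ENNReal.one_ne_top).2 hQ.a1_lt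
  obtain ⟨D, hD, hℓD⟩ : ∃ D : ℕ, 0 < D ∧ ℓ ≤ D :=
    ⟨⌈ℓ⌉₊ + 1, by omega, by push_cast; linarith [Nat.le_ceil ℓ]⟩
  obtain ⟨C₂, hC₂, hev⟩ := exists_pos_eventually_le_rpow (K := q⁻¹ * (4 * d)) d hD
    (by positivity) (by nlinarith : 0 < 1 - q ^ 2) (by nlinarith) (by linarith : 0 < 1 - q)
    (by linarith)
  obtain ⟨n₀, hn₀⟩ := eventually_atTop.1 (hev.and (eventually_ge_atTop D))
  have hbound : ∀ n, n₀ ≤ n → condP d Q (En d n)ᶜ ≤ ENNReal.ofReal (1 * (1 - q) ^ (C₂ * n)) :=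
    fun n hn => (condP_En_compl_le hQ.a1_pos hQ.a3 hind hℓD (hn₀ n hn).2 ⟨0, by omega⟩).trans
      (ENNReal.ofReal_le_ofReal (by simpa using (hn₀ n hn).1))
  have hgeom : ∀ n, n₀ ≤ n → condP d Q (En d n)ᶜ ≤ ENNReal.ofReal ((1 - q) ^ C₂) ^ n :=
    fun n hn => by
      rw [← ENNReal.ofReal_pow (Real.rpow_nonneg (by linarith) _), ← Real.rpow_natCast,
        ← Real.rpow_mul (by linarith), ← one_mul ((1 - q) ^ _)]
      exact hbound n hn
  exact ⟨⟨1, C₂, one_pos, hC₂, n₀, hbound⟩, tsum_ne_top_of_le_pow (fun n => measure_ne_top _ _)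
    (ENNReal.ofReal_lt_one.2 (Real.rpow_lt_one (by linarith) (by linarith) hC₂)) hgeom⟩

end RWDPP
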